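/- arXiv:2211.04430 — 2 statements merged into one kernel-verified Lean document; each statement's English description precedes it below -/
import Mathlib

section
/- If K ≥ N, then there exists a quantizer Q : Fin M → Fin K whose range has at most N elements and which satisfies e_Q = ∑_{j ∈ Fin M} max_{i ∈ Fin N} p i j; moreover every quantizer Q' : Fin M → Fin K satisfies e_{Q'} ≤ e_Q. (Paper's Theorem 3(b): when K > N, e^max is achieved by a quantizer with only N nonempty partitions.) -/
open Finset

/-- The maximum of a real-valued vector over the finite index set `Fin N` (`N > 0`). -/
noncomputable def colMax {N : ℕ} (hN : 0 < N) (v : Fin N → ℝ) : ℝ :=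
  Finset.univ.sup' (Finset.univ_nonempty_iff.mpr ⟨⟨0, hN⟩⟩) v

/-- The value `e_Q` induced by a quantizer `Q : Fin M → Fin K` on a joint matrix `p`:
`e_Q = ∑_k max_i ∑_{j : Q j = k} p i j`. -/
noncomputable def eQ {N M K : ℕ} (hN : 0 < N) (p : Fin N → Fin M → ℝ)
    (Q : Fin M → Fin K) : ℝ :=
  ∑ k, colMax hN (fun i => ∑ j ∈ Finset.univ.filter (fun j => Q j = k), p i j)

/-! The maximum of a sum is at most the sum of the maxima, with equality when a single index
attains all the maxima. Hence `e_Q ≤ ∑_j max_i p i j` for every quantizer, and equality holds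
when `Q` sends each column to (an injective label of) a row attaining its maximum; such a `Q`
uses at most `N` labels. -/

namespace Finset

variable {ι κ α : Type*} [AddCommMonoid α] [SemilatticeSup α] [IsOrderedAddMonoid α]
  {s : Finset ι} (H : s.Nonempty) (t : Finset κ) (f : ι → κ → α)

theorem sup'_sum_le_sum_sup' :
    s.sup' H (fun i => ∑ j ∈ t, f i j) ≤ ∑ j ∈ t, s.sup' H (fun i => f i j) :=
  sup'_le H _ fun _ hi => sum_le_sum fun j _ => le_sup' (fun i => f i j) hi

theorem sup'_sum_eq_sum_sup'_of_forall_eq {i₀ : ι} (hi₀ : i₀ ∈ s)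
    (h : ∀ j ∈ t, s.sup' H (fun i => f i j) = f i₀ j) :
    s.sup' H (fun i => ∑ j ∈ t, f i j) = ∑ j ∈ t, s.sup' H (fun i => f i j) := by
  refine le_antisymm (sup'_sum_le_sum_sup' H t f) ?_
  rw [sum_congr rfl h]
  exact le_sup' (fun i => ∑ j ∈ t, f i j) hi₀

end Finset

section Quantizer

variable {N M K : ℕ} (hN : 0 < N) (p : Fin N → Fin M → ℝ)

theorem exists_colMax_eq (v : Fin N → ℝ) : ∃ i, colMax hN v = v i := by
  obtain ⟨i, -, hi⟩ := exists_mem_eq_sup' (univ_nonempty_iff.mpr ⟨⟨0, hN⟩⟩) v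
  exact ⟨i, hi⟩

theorem eQ_le_sum_colMax (Q : Fin M → Fin K) :
    eQ hN p Q ≤ ∑ j, colMax hN (fun i => p i j) := by
  rw [← sum_fiberwise univ Q]
  exact sum_le_sum fun k _ => sup'_sum_le_sum_sup' _ _ _

theorem eQ_castLE_comp_argmax (hKN : N ≤ K) {f : Fin M → Fin N}
    (hf : ∀ j, colMax hN (fun i => p i j) = p (f j) j) :
    eQ hN p (Fin.castLE hKN ∘ f) = ∑ j, colMax hN (fun i => p i j) := by
  rw [← sum_fiberwise univ (Fin.castLE hKN ∘ f)]
  refine sum_congr rfl fun k _ => ?_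
  rcases (univ.filter fun j => (Fin.castLE hKN ∘ f) j = k).eq_empty_or_nonempty with
    hempty | ⟨j₀, hj₀⟩
  · simp only [hempty, sum_empty, colMax, sup'_const]
  · refine sup'_sum_eq_sum_sup'_of_forall_eq _ _ _ (mem_univ (f j₀)) fun j hj => ?_
    have hcell : f j = f j₀ := Fin.castLE_injective hKN ((mem_filter.1 hj).2.trans
      (mem_filter.1 hj₀).2.symm)
    rw [← hcell]
    exact hf j

theorem card_image_comp_le_card {α β γ : Type*} [Fintype α] [Fintype β] [DecidableEq γ]
    (g : β → γ) (f : α → β) : (univ.image (g ∘ f)).card ≤ Fintype.card β := by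
  classical
  rw [← image_image]
  exact card_image_le.trans (card_le_univ _)

end Quantizer

/-- Paper's Theorem 3(b): when `K ≥ N`, the maximal value `e^max` is achieved by a
quantizer using at most `N` nonempty cells. -/
theorem emax_with_N_cells (N M K : ℕ) (hN : 1 ≤ N)
    (hKN : N ≤ K)
    (p : Fin N → Fin M → ℝ) :
    ∃ Q : Fin M → Fin K,
      (Finset.univ.image Q).card ≤ N ∧
      eQ (by omega) p Q = (∑ j, colMax (by omega : 0 < N) (fun i => p i j)) ∧
      ∀ Q' : Fin M → Fin K, eQ (by omega) p Q' ≤ eQ (by omega) p Q := by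
  have hN₀ : 0 < N := hN
  choose f hf using fun j : Fin M => exists_colMax_eq hN₀ (fun i => p i j)
  have hopt := eQ_castLE_comp_argmax hN₀ p hKN hf
  refine ⟨Fin.castLE hKN ∘ f, ?_, hopt, fun Q' => (eQ_le_sum_colMax hN₀ p Q').trans hopt.ge⟩
  simpa using card_image_comp_le_card (Fin.castLE hKN) f
end

section
/- Let N ≥ 2 and K ≥ 1, and let (w, P) be a configuration with confidence e. Let f : ℝ → ℝ be concave on [0,1] with f(0) = 0, and let l : ℝ → ℝ be convex on the interval [1/N, 1] and satisfy f(x) = x·l(x) for all x ∈ (0,1]. Then the f-impurity satisfies I ≥ l(e). (Paper's Theorem 4, the lower bound l(e) on the impurity.) -/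
open Finset

/-!
Since `f` is concave with `f 0 = 0`, its chord slope `l x = f x / x` is antitone on `(0, 1]`.
Hence in each row `k`, every nonzero entry satisfies `f (P k i) = P k i * l (P k i) ≥ P k i * l (m k)`
with `m k` the row maximum, and summing over `i` gives `∑ i, f (P k i) ≥ l (m k)`. As `m k ∈ [1/N, 1]`,
Jensen's inequality for the convex `l` finishes: `l e = l (∑ k, w k * m k) ≤ ∑ k, w k * l (m k)`.
-/

theorem antitoneOn_of_concaveOn_of_eq_mul {f l : ℝ → ℝ} (hf : ConcaveOn ℝ (Set.Icc 0 1) f)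
    (hf0 : f 0 = 0) (hfl : ∀ x ∈ Set.Ioc (0 : ℝ) 1, f x = x * l x) :
    AntitoneOn l (Set.Ioc 0 1) := by
  intro x hx y hy hxy
  have hslope := hf.neg.secant_mono (a := 0) ⟨le_rfl, zero_le_one⟩ (Set.Ioc_subset_Icc_self hx)
    (Set.Ioc_subset_Icc_self hy) hx.1.ne' hy.1.ne' hxy
  simp only [Pi.neg_apply, hf0, hfl x hx, hfl y hy, neg_zero, sub_zero, neg_div] at hslope
  rw [mul_div_cancel_left₀ _ hx.1.ne', mul_div_cancel_left₀ _ hy.1.ne'] at hslope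
  exact neg_le_neg_iff.mp hslope

theorem le_sum_of_antitoneOn_of_eq_mul {ι : Type*} [Fintype ι] {f l : ℝ → ℝ}
    (hl : AntitoneOn l (Set.Ioc 0 1)) (hf0 : f 0 = 0)
    (hfl : ∀ x ∈ Set.Ioc (0 : ℝ) 1, f x = x * l x)
    {p : ι → ℝ} (hp : ∀ i, 0 ≤ p i) (hps : ∑ i, p i = 1) {m : ℝ} (hpm : ∀ i, p i ≤ m)
    (hm : m ≤ 1) : l m ≤ ∑ i, f (p i) := by
  have hterm : ∀ i, p i * l m ≤ f (p i) := by
    intro i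
    rcases (hp i).eq_or_lt with hpi | hpi
    · simp [← hpi, hf0]
    · have hpi_mem : p i ∈ Set.Ioc (0 : ℝ) 1 := ⟨hpi, (hpm i).trans hm⟩
      rw [hfl _ hpi_mem]
      exact mul_le_mul_of_nonneg_left (hl hpi_mem ⟨hpi.trans_le (hpm i), hm⟩ (hpm i)) (hp i)
  calc l m = ∑ i, p i * l m := by rw [← Finset.sum_mul, hps, one_mul]
    _ ≤ ∑ i, f (p i) := Finset.sum_le_sum fun i _ => hterm i

section colMax

variable {N : ℕ} (hN : 0 < N) {v : Fin N → ℝ}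

theorem le_colMax (v : Fin N → ℝ) (i : Fin N) : v i ≤ colMax hN v :=
  Finset.le_sup' v (Finset.mem_univ i)

theorem colMax_le {c : ℝ} (h : ∀ i, v i ≤ c) : colMax hN v ≤ c :=
  Finset.sup'_le _ _ fun i _ => h i

theorem one_div_card_le_colMax (hv : ∑ i, v i = 1) : 1 / (N : ℝ) ≤ colMax hN v := by
  rw [div_le_iff₀ (by positivity)]
  calc (1 : ℝ) = ∑ i, v i := hv.symm
    _ ≤ ∑ _i : Fin N, colMax hN v := Finset.sum_le_sum fun i _ => le_colMax hN v i
    _ = colMax hN v * N := by simp [mul_comm]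

end colMax

/-- Paper's Theorem 4 (lower bound): for a configuration `(w, P)` with confidence `e`,
if `f` is concave on `[0,1]` with `f 0 = 0`, `l` is convex on `[1/N, 1]` and
`f x = x * l x` on `(0,1]`, then the `f`-impurity is at least `l e`. -/
theorem impurity_lower_bound (N K : ℕ) (hN : 2 ≤ N)
    (w : Fin K → ℝ) (hw : ∀ k, 0 ≤ w k) (hws : ∑ k, w k = 1)
    (P : Fin K → Fin N → ℝ) (hP : ∀ k i, 0 ≤ P k i) (hPs : ∀ k, ∑ i, P k i = 1)
    (f l : ℝ → ℝ)
    (hf : ConcaveOn ℝ (Set.Icc (0 : ℝ) 1) f) (hf0 : f 0 = 0)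
    (hl : ConvexOn ℝ (Set.Icc (1 / (N : ℝ)) 1) l)
    (hfl : ∀ x ∈ Set.Ioc (0 : ℝ) 1, f x = x * l x)
    (e : ℝ) (he : e = ∑ k, w k * colMax (by omega) (P k)) :
    l e ≤ ∑ k, ∑ i, w k * f (P k i) := by
  have hN0 : 0 < N := by omega
  have hP_le_one : ∀ k i, P k i ≤ 1 := fun k i =>
    (Finset.single_le_sum (fun j _ => hP k j) (Finset.mem_univ i)).trans_eq (hPs k)
  have hmax_le_one : ∀ k, colMax hN0 (P k) ≤ 1 := fun k => colMax_le hN0 (hP_le_one k)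
  have hrow : ∀ k, l (colMax hN0 (P k)) ≤ ∑ i, f (P k i) := fun k =>
    le_sum_of_antitoneOn_of_eq_mul (antitoneOn_of_concaveOn_of_eq_mul hf hf0 hfl) hf0 hfl
      (hP k) (hPs k) (le_colMax hN0 (P k)) (hmax_le_one k)
  calc l e ≤ ∑ k, w k • l (colMax hN0 (P k)) := by
        rw [he]
        exact hl.map_sum_le (fun k _ => hw k) hws
          fun k _ => ⟨one_div_card_le_colMax hN0 (hPs k), hmax_le_one k⟩
    _ ≤ ∑ k, w k * ∑ i, f (P k i) :=
        Finset.sum_le_sum fun k _ => mul_le_mul_of_nonneg_left (hrow k) (hw k)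
    _ = ∑ k, ∑ i, w k * f (P k i) := by simp only [Finset.mul_sum]
end
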